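/- arXiv:1701.07074 — 2 statements merged into one kernel-verified Lean document; each statement's English description precedes it below -/
import Mathlib

section
/- Let ℓ, r be positive integers and let u, v be integer sequences satisfying, for all i ≥ 1, u_{i+1} = (r+1)·u_i + (ℓ + r·(ℓ−1))·v_i and v_{i+1} = r·u_i + (ℓ + (r−1)·(ℓ−1))·v_i. Then for all i ≥ 1, u_{i+2} = (ℓ·r + 2)·u_{i+1} − u_i. -/
/-! By Cayley–Hamilton, the first coordinate of a sequence of vectors `x (i+1) = M x i` satisfies
`u (i+2) = tr M * u (i+1) - det M * u i`. Here `M = !![r+1, ℓ+r(ℓ-1); r, ℓ+(r-1)(ℓ-1)]` has trace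
`ℓr + 2` and determinant `1`. -/

theorem fst_eq_trace_mul_sub_det_mul {R : Type*} [CommRing R] {a b c d : R} {u v : ℕ → R} {i : ℕ}
    (hu₀ : u (i + 1) = a * u i + b * v i) (hu₁ : u (i + 2) = a * u (i + 1) + b * v (i + 1))
    (hv₀ : v (i + 1) = c * u i + d * v i) :
    u (i + 2) = (a + d) * u (i + 1) - (a * d - b * c) * u i := by
  rw [hu₁, hv₀, hu₀]
  ring

theorem stmt_2_general (ℓ r : ℕ) (u v : ℕ → ℤ)
    (hu : ∀ i, 1 ≤ i → u (i + 1) = ((r : ℤ) + 1) * u i + ((ℓ : ℤ) + r * ((ℓ : ℤ) - 1)) * v i)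
    (hv : ∀ i, 1 ≤ i → v (i + 1) = (r : ℤ) * u i + ((ℓ : ℤ) + ((r : ℤ) - 1) * ((ℓ : ℤ) - 1)) * v i) :
    ∀ i, 1 ≤ i → u (i + 2) = ((ℓ : ℤ) * r + 2) * u (i + 1) - u i := by
  intro i hi
  have h := fst_eq_trace_mul_sub_det_mul (hu i hi) (hu (i + 1) (by omega)) (hv i hi)
  linear_combination h

theorem stmt_2 (ℓ r : ℕ) (hℓ : 1 ≤ ℓ) (hr : 1 ≤ r) (u v : ℕ → ℤ)
    (hu : ∀ i, 1 ≤ i → u (i + 1) = ((r : ℤ) + 1) * u i + ((ℓ : ℤ) + r * ((ℓ : ℤ) - 1)) * v i)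
    (hv : ∀ i, 1 ≤ i → v (i + 1) = (r : ℤ) * u i + ((ℓ : ℤ) + ((r : ℤ) - 1) * ((ℓ : ℤ) - 1)) * v i) :
    ∀ i, 1 ≤ i → u (i + 2) = ((ℓ : ℤ) * r + 2) * u (i + 1) - u i :=
  stmt_2_general ℓ r u v hu hv
end

section
/- Let α ≥ 3 and ℓ, r ≥ 1 be integers with ℓ·r = α − 2. Let f be an integer sequence satisfying f_i = α·f_{i−1} − f_{i−2} for i ≥ 2. Suppose for some j ≥ 1 the number m = (f_{j+1} − (r+1)·f_j) / (ℓ + r·(ℓ−1)) is an integer. Define sequences u, v by u₁ = f_j, v₁ = m, u_{i+1} = (r+1)·u_i + (ℓ + r·(ℓ−1))·v_i, v_{i+1} = r·u_i + (ℓ + (r−1)·(ℓ−1))·v_i. Then u_i = f_{j+i−1} for all i ≥ 1. -/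
/-!
Put `c = ℓ + r(ℓ-1)` and `d = ℓ + (r-1)(ℓ-1)`. The pair `(uᵢ, vᵢ)` is iterated by the matrix
`M = [[r+1, c], [r, d]]`, whose trace is `ℓr + 2 = α` and whose determinant is `1`. By
Cayley–Hamilton, `M² = αM - 1`, so `u` obeys the same recurrence as `f`. The hypothesis on `m`
says precisely that `u₂ = (r+1) f_j + c m = f_{j+1}`, so `u` and the shifted `f` share their first
two terms and hence agree.
-/

theorem fst_orbit_recurrence {R : Type*} [CommRing R] {a b c d : R} {u v : ℕ → R}
    (hu : ∀ i, u (i + 1) = a * u i + b * v i) (hv : ∀ i, v (i + 1) = c * u i + d * v i) (i : ℕ) :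
    u (i + 2) = (a + d) * u (i + 1) - (a * d - b * c) * u i := by
  linear_combination hu (i + 1) + b * hv i - d * hu i

theorem eq_of_second_order_recurrence {R : Type*} [CommRing R] (p q : R) {x y : ℕ → R}
    (hx : ∀ i, x (i + 2) = p * x (i + 1) - q * x i)
    (hy : ∀ i, y (i + 2) = p * y (i + 1) - q * y i)
    (h0 : x 0 = y 0) (h1 : x 1 = y 1) : x = y := by
  funext n
  induction n using Nat.twoStepInduction with
  | zero => exact h0
  | one => exact h1
  | more n ih₀ ih₁ => rw [hx, hy, ih₀, ih₁]

theorem stmt_11_general (α ℓ r : ℕ) (hα : 3 ≤ α) (hlr : ℓ * r = α - 2)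
    (f : ℕ → ℤ) (hrec : ∀ i, 2 ≤ i → f i = (α : ℤ) * f (i - 1) - f (i - 2))
    (j : ℕ) (m : ℤ)
    (hm : ((ℓ : ℤ) + r * ((ℓ : ℤ) - 1)) * m = f (j + 1) - ((r : ℤ) + 1) * f j)
    (u v : ℕ → ℤ) (hu1 : u 1 = f j) (hv1 : v 1 = m)
    (hu : ∀ i, 1 ≤ i → u (i + 1) = ((r : ℤ) + 1) * u i + ((ℓ : ℤ) + r * ((ℓ : ℤ) - 1)) * v i)
    (hv : ∀ i, 1 ≤ i → v (i + 1) = (r : ℤ) * u i + ((ℓ : ℤ) + ((r : ℤ) - 1) * ((ℓ : ℤ) - 1)) * v i) :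
    ∀ i, 1 ≤ i → u i = f (j + i - 1) := by
  have hα' : (α : ℤ) = ℓ * r + 2 := by omega
  set U : ℕ → ℤ := fun i => u (i + 1)
  set F : ℕ → ℤ := fun i => f (j + i)
  have hU (i : ℕ) : U (i + 2) = α * U (i + 1) - 1 * U i := by
    rw [fst_orbit_recurrence (u := U) (v := fun i => v (i + 1))
      (fun i => hu (i + 1) (by omega)) (fun i => hv (i + 1) (by omega)) i, hα']
    ring
  have hF (i : ℕ) : F (i + 2) = α * F (i + 1) - 1 * F i := by
    simpa [F, ← add_assoc] using hrec (j + i + 2) (by omega)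
  have hUF : U = F := eq_of_second_order_recurrence (α : ℤ) 1 hU hF hu1 <| by
    simp only [U, F, hu 1 le_rfl, hu1, hv1, hm]
    ring
  intro i hi
  obtain ⟨k, rfl⟩ := Nat.exists_eq_add_of_le' hi
  simpa [U, F] using congrFun hUF k

theorem stmt_11 (α ℓ r : ℕ) (hα : 3 ≤ α) (hℓ : 1 ≤ ℓ) (hr : 1 ≤ r) (hlr : ℓ * r = α - 2)
    (f : ℕ → ℤ) (hrec : ∀ i, 2 ≤ i → f i = (α : ℤ) * f (i - 1) - f (i - 2))
    (j : ℕ) (hj : 1 ≤ j) (m : ℤ)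
    (hm : ((ℓ : ℤ) + r * ((ℓ : ℤ) - 1)) * m = f (j + 1) - ((r : ℤ) + 1) * f j)
    (u v : ℕ → ℤ) (hu1 : u 1 = f j) (hv1 : v 1 = m)
    (hu : ∀ i, 1 ≤ i → u (i + 1) = ((r : ℤ) + 1) * u i + ((ℓ : ℤ) + r * ((ℓ : ℤ) - 1)) * v i)
    (hv : ∀ i, 1 ≤ i → v (i + 1) = (r : ℤ) * u i + ((ℓ : ℤ) + ((r : ℤ) - 1) * ((ℓ : ℤ) - 1)) * v i) :
    ∀ i, 1 ≤ i → u i = f (j + i - 1) :=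
  stmt_11_general α ℓ r hα hlr f hrec j m hm u v hu1 hv1 hu hv
end
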